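/- Let R : [0, ℓ] → ℝⁿ be a C² arc-length parametrized curve with unit tangent T(s) = R'(s), and let N₁(s), …, N_{n-1}(s) be a continuously differentiable orthonormal frame of the normal space along the curve. Consider the tube map Φ(s, y) = R(s) + ∑_{i=1}^{n-1} y_i N_i(s) defined for s ∈ [0, ℓ] and y in the (n-1)-dimensional ball of radius r. Then the Jacobian determinant of Φ equals J(s,y) = 1 + ∑_{i=1}^{n-1} y_i k_i(s), where k_i(s) = ⟨T(s), N_i'(s)⟩. -/

import Mathlib

/-! The columns of the Jacobian of `Φ` at `(s, y)` are `∂Φ/∂s = T + ∑ yᵢ Nᵢ'` and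
`∂Φ/∂yᵢ = Nᵢ`. The determinant is alternating and the columns `Nᵢ` are kept, so only the
`T`-component `⟪T, T + ∑ yᵢ Nᵢ'⟫ = 1 + ∑ yᵢ kᵢ` of the first column survives, multiplying
`det (T, N₁, …, Nₘ) = 1`. -/

open Function

theorem AlternatingMap.map_update_basis {R M N ι : Type*} [CommSemiring R] [AddCommMonoid M]
    [Module R M] [AddCommMonoid N] [Module R N] [DecidableEq ι]
    (g : M [⋀^ι]→ₗ[R] N) (v : Module.Basis ι R M) (i : ι) (x : M) :
    g (update v i x) = v.repr x i • g v := by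
  change g.toMultilinearMap.toLinearMap v i x = (v.coord i).smulRight (g v) x
  congr 1
  refine v.ext fun k => ?_
  rcases eq_or_ne k i with rfl | hki
  · simp
  · simp only [MultilinearMap.toLinearMap_apply, LinearMap.smulRight_apply, Module.Basis.coord_apply,
      Module.Basis.repr_self, Finsupp.single_apply, if_neg hki, zero_smul]
    exact g.map_eq_zero_of_eq _ (by rw [update_self, update_of_ne hki]) hki

theorem Orthonormal.alternatingMap_update {𝕜 E N ι : Type*} [RCLike 𝕜] [NormedAddCommGroup E]
    [InnerProductSpace 𝕜 E] [FiniteDimensional 𝕜 E] [AddCommMonoid N] [Module 𝕜 N]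
    [Fintype ι] [DecidableEq ι] {f : ι → E} (hf : Orthonormal 𝕜 f)
    (hcard : Fintype.card ι = Module.finrank 𝕜 E)
    (g : E [⋀^ι]→ₗ[𝕜] N) (i : ι) (x : E) :
    g (update f i x) = inner 𝕜 (f i) x • g f := by
  let O := OrthonormalBasis.mk hf (hf.linearIndependent.span_eq_top_of_card_eq_finrank' hcard).ge
  have hO : ⇑O = f := OrthonormalBasis.coe_mk _ _
  have := g.map_update_basis O.toBasis i x
  rwa [OrthonormalBasis.coe_toBasis, OrthonormalBasis.coe_toBasis_repr_apply,
    O.repr_apply_apply, hO] at this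

theorem stmt_10_general (m : ℕ) (ℓ r : ℝ)
    (R : ℝ → EuclideanSpace ℝ (Fin (m + 1)))
    (N : Fin m → ℝ → EuclideanSpace ℝ (Fin (m + 1)))
    (horth : ∀ s ∈ Set.Icc (0:ℝ) ℓ,
      Orthonormal ℝ (Fin.cons (deriv R s) (fun i => N i s) : Fin (m + 1) → _))
    (b : OrthonormalBasis (Fin (m + 1)) ℝ (EuclideanSpace ℝ (Fin (m + 1))))
    (hdet : ∀ s ∈ Set.Icc (0:ℝ) ℓ,
      b.toBasis.det (Fin.cons (deriv R s) (fun i => N i s)) = 1) :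
    ∀ s ∈ Set.Icc (0:ℝ) ℓ, ∀ y : EuclideanSpace ℝ (Fin m), ‖y‖ < r →
      b.toBasis.det
          (Fin.cons (deriv R s + ∑ i, y i • deriv (N i) s) (fun i => N i s))
        = 1 + ∑ i, y i * (inner ℝ (deriv R s) (deriv (N i) s) : ℝ) := by
  intro s hs y _
  have hunit : ‖deriv R s‖ = 1 := by simpa using (horth s hs).1 0
  rw [← Fin.update_cons_zero (x := deriv R s),
    (horth s hs).alternatingMap_update (by simp), hdet s hs]
  simp [inner_add_right, hunit, inner_sum, inner_smul_right]

/-- Tube-coordinate Jacobian: for a `C²` arc-length curve `R` in `ℝ^(m+1)` with unit tangent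
`T(s) = R'(s)` and a `C¹` orthonormal normal frame `N₁,…,N_m`, the Jacobian determinant of
`Φ(s,y) = R(s) + ∑ yᵢ Nᵢ(s)` (computed w.r.t. an orthonormal basis in which the frame has
determinant `1`) equals `1 + ∑ yᵢ kᵢ(s)` with `kᵢ(s) = ⟨T(s), Nᵢ'(s)⟩`. -/
theorem stmt_10 (m : ℕ) (ℓ r : ℝ) (hℓ : 0 < ℓ) (hr : 0 < r)
    (R : ℝ → EuclideanSpace ℝ (Fin (m + 1)))
    (N : Fin m → ℝ → EuclideanSpace ℝ (Fin (m + 1)))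
    (hR : ContDiff ℝ 2 R) (hN : ∀ i, ContDiff ℝ 1 (N i))
    (horth : ∀ s ∈ Set.Icc (0:ℝ) ℓ,
      Orthonormal ℝ (Fin.cons (deriv R s) (fun i => N i s) : Fin (m + 1) → _))
    (b : OrthonormalBasis (Fin (m + 1)) ℝ (EuclideanSpace ℝ (Fin (m + 1))))
    (hdet : ∀ s ∈ Set.Icc (0:ℝ) ℓ,
      b.toBasis.det (Fin.cons (deriv R s) (fun i => N i s)) = 1) :
    ∀ s ∈ Set.Icc (0:ℝ) ℓ, ∀ y : EuclideanSpace ℝ (Fin m), ‖y‖ < r →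
      b.toBasis.det
          (Fin.cons (deriv R s + ∑ i, y i • deriv (N i) s) (fun i => N i s))
        = 1 + ∑ i, y i * (inner ℝ (deriv R s) (deriv (N i) s) : ℝ) :=
  stmt_10_general m ℓ r R N horth b hdet
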